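/- arXiv:2404.03182 — 5 statements merged into one kernel-verified Lean document; each statement's English description precedes it below -/
import Mathlib

section
/- Let n ≥ 1 and 1 ≤ m ≤ n−1 be integers, N = 2^n, and let s, t ∈ {0, …, N−1}. Write s = q·2^{n−m} + r with 0 ≤ q < 2^m, 0 ≤ r < 2^{n−m}, and t = u·2^m + v with 0 ≤ u < 2^{n−m}, 0 ≤ v < 2^m. Then exp(−2πi·s·t/2^n) = exp(−2πi·q·v/2^m) · exp(−2πi·r·u/2^{n−m}) · exp(−2πi·r·v/2^n). -/
open Complex Real

/-- Expanding `(q K + r)(u M + v) / (M K)` leaves the integer cross term `q u`, which the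
exponential does not see by `2πi`-periodicity. -/
theorem exp_neg_two_pi_I_mul_mixed_radix {M K : ℂ} (hM : M ≠ 0) (hK : K ≠ 0) (q u : ℤ)
    (r v : ℂ) :
    exp (-2 * π * I * (q * K + r) * (u * M + v) / (M * K)) =
      exp (-2 * π * I * q * v / M) * exp (-2 * π * I * r * u / K) *
        exp (-2 * π * I * r * v / (M * K)) := by
  have h_exponent : -2 * π * I * (q * K + r) * (u * M + v) / (M * K) =
      (-2 * π * I * q * v / M + -2 * π * I * r * u / K + -2 * π * I * r * v / (M * K)) +
        ((-(q * u) : ℤ) : ℂ) * (2 * π * I) := by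
    push_cast
    field_simp
    ring
  rw [h_exponent, exp_periodic.int_mul, Complex.exp_add, Complex.exp_add]

theorem dft_entry_factorization_general (n m : ℕ) (hm2 : m ≤ n - 1)
    (q r u v s t : ℕ)
    (hs : s = q * 2 ^ (n - m) + r) (ht : t = u * 2 ^ m + v) :
    Complex.exp (-2 * (Real.pi : ℂ) * Complex.I * (s : ℂ) * (t : ℂ) / 2 ^ n) =
      Complex.exp (-2 * (Real.pi : ℂ) * Complex.I * (q : ℂ) * (v : ℂ) / 2 ^ m) *
        Complex.exp (-2 * (Real.pi : ℂ) * Complex.I * (r : ℂ) * (u : ℂ) / 2 ^ (n - m)) *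
        Complex.exp (-2 * (Real.pi : ℂ) * Complex.I * (r : ℂ) * (v : ℂ) / 2 ^ n) := by
  have h_pow : (2 : ℂ) ^ n = 2 ^ m * 2 ^ (n - m) := by
    rw [← pow_add, Nat.add_sub_cancel' (hm2.trans (Nat.sub_le n 1))]
  subst hs ht
  push_cast
  rw [h_pow]
  simpa only [Int.cast_natCast] using exp_neg_two_pi_I_mul_mixed_radix
    (pow_ne_zero m two_ne_zero) (pow_ne_zero (n - m) two_ne_zero) q u r v

/-- Factorization of a DFT entry: for `N = 2^n`, `s = q·2^(n-m) + r`,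
`t = u·2^m + v`, we have
`exp(−2πi·s·t/2^n) = exp(−2πi·q·v/2^m) · exp(−2πi·r·u/2^(n−m)) · exp(−2πi·r·v/2^n)`. -/
theorem dft_entry_factorization (n m : ℕ) (hn : 1 ≤ n) (hm1 : 1 ≤ m) (hm2 : m ≤ n - 1)
    (q r u v s t : ℕ) (hq : q < 2 ^ m) (hr : r < 2 ^ (n - m))
    (hu : u < 2 ^ (n - m)) (hv : v < 2 ^ m)
    (hs : s = q * 2 ^ (n - m) + r) (ht : t = u * 2 ^ m + v)
    (hsN : s < 2 ^ n) (htN : t < 2 ^ n) :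
    Complex.exp (-2 * (Real.pi : ℂ) * Complex.I * (s : ℂ) * (t : ℂ) / 2 ^ n) =
      Complex.exp (-2 * (Real.pi : ℂ) * Complex.I * (q : ℂ) * (v : ℂ) / 2 ^ m) *
        Complex.exp (-2 * (Real.pi : ℂ) * Complex.I * (r : ℂ) * (u : ℂ) / 2 ^ (n - m)) *
        Complex.exp (-2 * (Real.pi : ℂ) * Complex.I * (r : ℂ) * (v : ℂ) / 2 ^ n) :=
  dft_entry_factorization_general n m hm2 q r u v s t hs ht
end

section
/- Let n ≥ 1 and 0 ≤ l ≤ n be integers. For i ∈ {0, …, 2^l−1} and j ∈ {0, …, 2^{n−l}−1}, define the block F_{i,j} ∈ ℂ^{2^{n−l} × 2^l} of the 2^n × 2^n DFT matrix by F_{i,j}[r, v] = exp(−2πi(i·2^{n−l}+r)(j·2^l+v)/2^n) for r ∈ {0,…,2^{n−l}−1}, v ∈ {0,…,2^l−1}. Then F_{i,j} = D_j · F_{0,0} · D_i, where D_j is the 2^{n−l} × 2^{n−l} diagonal matrix with diagonal entries exp(−2πi·r·j/2^{n−l}) for r ∈ {0,…,2^{n−l}−1}, and D_i is the 2^l ×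 2^l diagonal matrix with diagonal entries exp(−2πi·i·v/2^l) for v ∈ {0,…,2^l−1}. -/
open Complex Real

/-- The cross term `a * b` of the exponent only contributes whole turns. -/
theorem exp_dft_kernel_block (a b : ℤ) (r v p q : ℂ) (hp : p ≠ 0) (hq : q ≠ 0) :
    exp (-2 * π * I * (a * q + r) * (b * p + v) / (q * p)) =
      exp (-2 * π * I * r * b / q) * exp (-2 * π * I * r * v / (q * p)) *
        exp (-2 * π * I * a * v / p) := by
  have h_expand : -2 * π * I * (a * q + r) * (b * p + v) / (q * p) =
      (-2 * π * I * r * b / q + -2 * π * I * r * v / (q * p) + -2 * π * I * a * v / p) +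
        (-(a * b) : ℤ) * (2 * π * I) := by
    field_simp
    push_cast
    ring
  rw [h_expand, Complex.exp_add, exp_int_mul_two_pi_mul_I, mul_one, Complex.exp_add,
    Complex.exp_add]

theorem dft_block_structure_general (n l : ℕ) (hl : l ≤ n)
    (i : Fin (2 ^ l)) (j : Fin (2 ^ (n - l))) :
    (Matrix.of fun (r : Fin (2 ^ (n - l))) (v : Fin (2 ^ l)) =>
        Complex.exp (-2 * (Real.pi : ℂ) * Complex.I *
          (((i : ℕ) : ℂ) * 2 ^ (n - l) + ((r : ℕ) : ℂ)) *
          (((j : ℕ) : ℂ) * 2 ^ l + ((v : ℕ) : ℂ)) / 2 ^ n)) =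
      (Matrix.diagonal fun r : Fin (2 ^ (n - l)) =>
          Complex.exp (-2 * (Real.pi : ℂ) * Complex.I * ((r : ℕ) : ℂ) * ((j : ℕ) : ℂ) /
            2 ^ (n - l))) *
        (Matrix.of fun (r : Fin (2 ^ (n - l))) (v : Fin (2 ^ l)) =>
          Complex.exp (-2 * (Real.pi : ℂ) * Complex.I * ((r : ℕ) : ℂ) * ((v : ℕ) : ℂ) /
            2 ^ n)) *
        (Matrix.diagonal fun v : Fin (2 ^ l) =>
          Complex.exp (-2 * (Real.pi : ℂ) * Complex.I * ((i : ℕ) : ℂ) * ((v : ℕ) : ℂ) /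
            2 ^ l)) := by
  have h_split : (2 : ℂ) ^ n = 2 ^ (n - l) * 2 ^ l := by
    rw [← pow_add, Nat.sub_add_cancel hl]
  ext r v
  simp only [Matrix.diagonal_mul, Matrix.mul_diagonal, Matrix.of_apply, h_split]
  have h_block := exp_dft_kernel_block (i : ℕ) (j : ℕ) (r : ℕ) (v : ℕ) (2 ^ l)
    (2 ^ (n - l)) (pow_ne_zero _ two_ne_zero) (pow_ne_zero _ two_ne_zero)
  push_cast at h_block
  exact h_block

/-- Complementary low-rank structure of the DFT: the `(i,j)`-th block of
the `2^n × 2^n` DFT matrix at level `l` satisfies `F_{i,j} = D_j · F_{0,0} · D_i` for the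
stated unitary diagonal matrices. -/
theorem dft_block_structure (n l : ℕ) (hn : 1 ≤ n) (hl : l ≤ n)
    (i : Fin (2 ^ l)) (j : Fin (2 ^ (n - l))) :
    (Matrix.of fun (r : Fin (2 ^ (n - l))) (v : Fin (2 ^ l)) =>
        Complex.exp (-2 * (Real.pi : ℂ) * Complex.I *
          (((i : ℕ) : ℂ) * 2 ^ (n - l) + ((r : ℕ) : ℂ)) *
          (((j : ℕ) : ℂ) * 2 ^ l + ((v : ℕ) : ℂ)) / 2 ^ n)) =
      (Matrix.diagonal fun r : Fin (2 ^ (n - l)) =>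
          Complex.exp (-2 * (Real.pi : ℂ) * Complex.I * ((r : ℕ) : ℂ) * ((j : ℕ) : ℂ) /
            2 ^ (n - l))) *
        (Matrix.of fun (r : Fin (2 ^ (n - l))) (v : Fin (2 ^ l)) =>
          Complex.exp (-2 * (Real.pi : ℂ) * Complex.I * ((r : ℕ) : ℂ) * ((v : ℕ) : ℂ) /
            2 ^ n)) *
        (Matrix.diagonal fun v : Fin (2 ^ l) =>
          Complex.exp (-2 * (Real.pi : ℂ) * Complex.I * ((i : ℕ) : ℂ) * ((v : ℕ) : ℂ) /
            2 ^ l)) :=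
  dft_block_structure_general n l hl i j
end

section
/- Let K ≥ 2 be an integer. Then for all x, y ∈ [0,1], the error of (K+1)-point Chebyshev–Lobatto interpolation of f_y(x) = exp(−2πixy) satisfies |exp(−2πixy) − Σ_{α=0}^{K} exp(−2πi·y·c^α)·P^α(x)| ≤ 4·(π/2)^{K+1}·e^K·K^{−K} / (K − π/2). -/
/-- The Chebyshev–Lobatto points on `[0,1]`: `c^α = (1 − cos(πα/K))/2`, `α = 0, …, K`. -/
noncomputable def cheb (K : ℕ) (α : Fin (K + 1)) : ℝ :=
  (1 - Real.cos (Real.pi * ((α : ℕ) : ℝ) / (K : ℝ))) / 2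

/-- The Lagrange interpolation basis polynomials for the Chebyshev–Lobatto points,
evaluated at `x`: the unique polynomials of degree at most `K` with `P^α(c^β) = δ_{αβ}`. -/
noncomputable def chebP (K : ℕ) (α : Fin (K + 1)) (x : ℝ) : ℝ :=
  (Lagrange.basis Finset.univ (cheb K) α).eval x

open Polynomial Finset
open scoped ContDiff

theorem genRolle : ∀ (n : ℕ) (f : ℝ → ℝ), ContDiff ℝ ∞ f → ∀ (a b : ℝ) (s : Finset ℝ),
    n + 1 ≤ s.card → (↑s : Set ℝ) ⊆ Set.Icc a b → (∀ z ∈ s, f z = 0) →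
    ∃ c ∈ Set.Icc a b, iteratedDeriv n f c = 0 := by
  intro n
  induction n with
  | zero =>
    intro f hf a b s hcard hsub hzero
    obtain ⟨z, hz⟩ := Finset.card_pos.mp (show 0 < s.card by omega)
    exact ⟨z, hsub hz, by simpa using hzero z hz⟩
  | succ n ih =>
    intro f hf a b s hcard hsub hzero
    obtain ⟨t, hts, htcard⟩ := Finset.exists_subset_card_eq (show n + 2 ≤ s.card by omega)
    set e := t.orderIsoOfFin htcard with he
    set p : Fin (n + 2) → ℝ := fun i => (e i : ℝ) with hp
    have hpmono : StrictMono p := fun i j hij => Subtype.coe_lt_coe.mpr (e.strictMono hij)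
    have hpt : ∀ i, p i ∈ t := fun i => (e i).2
    have H : ∀ i : Fin (n + 1), ∃ c ∈ Set.Ioo (p i.castSucc) (p i.succ), deriv f c = 0 := by
      intro i
      apply exists_deriv_eq_zero (hpmono (Fin.castSucc_lt_succ (i := i))) hf.continuous.continuousOn
      rw [hzero _ (hts (hpt i.castSucc)), hzero _ (hts (hpt i.succ))]
    choose ξ hξmem hξ0 using H
    have hξmono : StrictMono ξ := by
      intro i j hij
      have h1 : ξ i < p i.succ := (hξmem i).2
      have h2 : p j.castSucc < ξ j := (hξmem j).1
      have h3 : p i.succ ≤ p j.castSucc := hpmono.monotone (by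
        rw [Fin.le_def]
        simp only [Fin.lt_def] at hij
        simp only [Fin.val_succ, Fin.coe_castSucc]
        omega)
      linarith
    have hIcc : ∀ i, ξ i ∈ Set.Icc a b := by
      intro i
      have h1 := hsub (hts (hpt i.castSucc))
      have h2 := hsub (hts (hpt i.succ))
      exact ⟨le_trans h1.1 (hξmem i).1.le, le_trans (hξmem i).2.le h2.2⟩
    obtain ⟨c, hc, hc0⟩ := ih (deriv f) ((contDiff_infty_iff_deriv.mp hf).2) a b
      (Finset.image ξ Finset.univ)
      (by rw [Finset.card_image_of_injective _ hξmono.injective, Finset.card_univ,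
          Fintype.card_fin])
      (by intro z hz
          simp only [Finset.coe_image, Set.mem_image] at hz
          obtain ⟨i, _, rfl⟩ := hz; exact hIcc i)
      (by intro z hz
          simp only [Finset.mem_image] at hz
          obtain ⟨i, _, rfl⟩ := hz; exact hξ0 i)
    exact ⟨c, hc, by rw [iteratedDeriv_succ']; exact hc0⟩

theorem polyEval_contDiff (p : Polynomial ℝ) : ContDiff ℝ ∞ fun t : ℝ => p.eval t := by
  induction p using Polynomial.induction_on' with
  | add p q hp hq => simpa using hp.add hq
  | monomial n a => simpa [Polynomial.eval_monomial] using contDiff_const.mul (contDiff_id.pow n)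

theorem iteratedDeriv_sub_polyEval (f : ℝ → ℝ) (hf : ContDiff ℝ ∞ f) (q : Polynomial ℝ) :
    ∀ n : ℕ, iteratedDeriv n (fun t => f t - q.eval t)
      = fun t => iteratedDeriv n f t - (Polynomial.derivative^[n] q).eval t := by
  intro n
  induction n with
  | zero => simp
  | succ n ih =>
    rw [iteratedDeriv_succ, ih, iteratedDeriv_succ]
    funext t
    rw [deriv_fun_sub ((hf.differentiable_iteratedDeriv n (by
          exact_mod_cast WithTop.coe_lt_coe.mpr (WithTop.coe_lt_top n))).differentiableAt)
        (((polyEval_contDiff _).differentiable (by simp)).differentiableAt),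
      Polynomial.deriv, Function.iterate_succ_apply']

theorem U_deg : ∀ n : ℕ, (Polynomial.Chebyshev.U ℝ (n : ℤ)).natDegree = n ∧
    (Polynomial.Chebyshev.U ℝ (n : ℤ)).leadingCoeff = 2 ^ n := by
  intro n
  induction n using Nat.twoStepInduction with
  | zero => simp [Polynomial.Chebyshev.U_zero]
  | one =>
    constructor
    · simpa [Polynomial.Chebyshev.U_one] using by
        rw [show ((2 : ℝ[X]) * X) = C 2 * X from by rw [map_ofNat]]
        simp [natDegree_C_mul (two_ne_zero)]
    · rw [show ((1:ℕ) : ℤ) = 1 from rfl, Polynomial.Chebyshev.U_one,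
        show ((2 : ℝ[X]) * X) = C 2 * X from by rw [map_ofNat], leadingCoeff_mul]
      simp
  | more n ih1 ih2 =>
    have hrec : Polynomial.Chebyshev.U ℝ ((n + 2 : ℕ) : ℤ)
        = 2 * X * Polynomial.Chebyshev.U ℝ ((n + 1 : ℕ) : ℤ) - Polynomial.Chebyshev.U ℝ (n : ℤ) := by
      push_cast
      exact Polynomial.Chebyshev.U_add_two ℝ n
    set q := Polynomial.Chebyshev.U ℝ ((n + 1 : ℕ) : ℤ) with hq
    have hqne : q ≠ 0 := leadingCoeff_ne_zero.mp (by rw [ih2.2]; positivity)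
    have hA : (2 * X * q : ℝ[X]) = C 2 * (X * q) := by ring_nf; rw [map_ofNat]
    have hAdeg : (2 * X * q : ℝ[X]).natDegree = n + 2 := by
      rw [hA, natDegree_C_mul (two_ne_zero), natDegree_mul X_ne_zero hqne, natDegree_X, ih2.1]
      omega
    have hAlead : (2 * X * q : ℝ[X]).leadingCoeff = 2 ^ (n + 2) := by
      rw [hA, leadingCoeff_mul, leadingCoeff_mul, leadingCoeff_C, leadingCoeff_X, ih2.2]
      ring
    have hAne : (2 * X * q : ℝ[X]) ≠ 0 := leadingCoeff_ne_zero.mp (by rw [hAlead]; positivity)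
    have hlt : (Polynomial.Chebyshev.U ℝ (n : ℤ)).natDegree < (2 * X * q : ℝ[X]).natDegree := by
      rw [ih1.1, hAdeg]; omega
    constructor
    · rw [hrec, natDegree_sub_eq_left_of_natDegree_lt hlt, hAdeg]
    · rw [hrec, leadingCoeff_sub_of_degree_lt, hAlead]
      calc (Polynomial.Chebyshev.U ℝ (n : ℤ)).degree ≤ (Polynomial.Chebyshev.U ℝ (n : ℤ)).natDegree :=
            degree_le_natDegree
        _ < (2 * X * q : ℝ[X]).degree := by
            rw [degree_eq_natDegree hAne]
            exact_mod_cast Nat.cast_lt.mpr hlt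

theorem theta_mem (K : ℕ) (hK : 1 ≤ K) (α : Fin (K + 1)) :
    Real.pi * ((α : ℕ) : ℝ) / (K : ℝ) ∈ Set.Icc 0 Real.pi := by
  have hKpos : (0:ℝ) < K := by exact_mod_cast hK
  have hα : ((α : ℕ) : ℝ) ≤ (K : ℝ) := by exact_mod_cast Nat.lt_succ_iff.mp α.2
  constructor
  · positivity
  · rw [div_le_iff₀ hKpos]
    have := Real.pi_pos
    nlinarith [α.2]

theorem cos_theta_inj (K : ℕ) (hK : 1 ≤ K) :
    Function.Injective (fun α : Fin (K + 1) => Real.cos (Real.pi * ((α : ℕ) : ℝ) / (K : ℝ))) := by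
  intro α β h
  have h2 := Real.injOn_cos (theta_mem K hK α) (theta_mem K hK β) h
  have hKpos : (0:ℝ) < K := by exact_mod_cast hK
  have := Real.pi_pos
  have h3 : ((α : ℕ) : ℝ) = ((β : ℕ) : ℝ) := by
    rw [div_left_inj' hKpos.ne'] at h2
    exact mul_left_cancel₀ Real.pi_pos.ne' h2
  exact Fin.ext (by exact_mod_cast h3)

theorem node_identity (K : ℕ) (hK : 1 ≤ K) :
    C ((2:ℝ)^(K-1)) * ∏ α : Fin (K+1), (X - C (Real.cos (Real.pi * ((α : ℕ) : ℝ) / (K : ℝ))))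
      = (X^2 - 1) * Polynomial.Chebyshev.U ℝ (((K-1 : ℕ) : ℤ)) := by
  have hKpos : (0:ℝ) < K := by exact_mod_cast hK
  set v : Fin (K+1) → ℝ := fun α => Real.cos (Real.pi * ((α : ℕ) : ℝ) / (K : ℝ)) with hv
  have hvinj : Function.Injective v := cos_theta_inj K hK
  set P : ℝ[X] := ∏ α : Fin (K+1), (X - C (v α)) with hP
  have hPmonic : P.Monic := monic_prod_of_monic _ _ (fun α _ => monic_X_sub_C _)
  have hPdeg : P.natDegree = K + 1 := by
    rw [hP, natDegree_prod _ _ (fun α _ => X_sub_C_ne_zero _)]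
    simp
  set A : ℝ[X] := C ((2:ℝ)^(K-1)) * P with hA
  have hc : ((2:ℝ)^(K-1)) ≠ 0 := by positivity
  have hAne : A ≠ 0 := mul_ne_zero (by simpa using hc) hPmonic.ne_zero
  have hAdeg : A.natDegree = K + 1 := by rw [hA, natDegree_C_mul hc, hPdeg]
  have hAlead : A.leadingCoeff = (2:ℝ)^(K-1) := by
    rw [hA, leadingCoeff_mul, leadingCoeff_C, hPmonic.leadingCoeff, mul_one]
  set B : ℝ[X] := (X^2 - 1) * Polynomial.Chebyshev.U ℝ (((K-1 : ℕ) : ℤ)) with hB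
  have hX2 : ((X^2 - 1 : ℝ[X])).Monic := by
    have := monic_X_pow_sub_C (1:ℝ) (two_ne_zero (α := ℕ))
    simpa using this
  have hUne : Polynomial.Chebyshev.U ℝ (((K-1 : ℕ) : ℤ)) ≠ 0 :=
    leadingCoeff_ne_zero.mp (by rw [(U_deg (K-1)).2]; positivity)
  have hBne : B ≠ 0 := mul_ne_zero hX2.ne_zero hUne
  have hBdeg : B.natDegree = K + 1 := by
    rw [hB, natDegree_mul hX2.ne_zero hUne, (U_deg (K-1)).1]
    have : (X^2 - 1 : ℝ[X]).natDegree = 2 := by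
      have := natDegree_X_pow_sub_C (n := 2) (r := (1:ℝ))
      simpa using this
    omega
  have hBlead : B.leadingCoeff = (2:ℝ)^(K-1) := by
    rw [hB, leadingCoeff_mul, hX2.leadingCoeff, (U_deg (K-1)).2, one_mul]
  -- the evaluation set
  set s : Finset ℝ := Finset.image v Finset.univ with hs
  have hscard : s.card = K + 1 := by
    rw [hs, Finset.card_image_of_injective _ hvinj, Finset.card_univ, Fintype.card_fin]
  have hdegAB : A.degree = B.degree := by
    rw [degree_eq_natDegree hAne, degree_eq_natDegree hBne, hAdeg, hBdeg]
  have hdlt : (A - B).degree < (s.card : WithBot ℕ) := by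
    rw [hscard]
    rcases eq_or_ne A B with h | h
    · simp [h, degree_zero]
    · have := degree_sub_lt hdegAB hAne (hAlead.trans hBlead.symm)
      rwa [degree_eq_natDegree hAne, hAdeg] at this
  have heval : ∀ z ∈ s, (A - B).eval z = 0 := by
    intro z hz
    rw [hs, Finset.mem_image] at hz
    obtain ⟨α, _, rfl⟩ := hz
    have hevalA : A.eval (v α) = 0 := by
      rw [hA, eval_mul, hP, eval_prod]
      have : ((X : ℝ[X]) - C (v α)).eval (v α) = 0 := by simp
      rw [Finset.prod_eq_zero (Finset.mem_univ α) this, mul_zero]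
    have hevalB : B.eval (v α) = 0 := by
      rw [hB, eval_mul]
      set θ := Real.pi * ((α : ℕ) : ℝ) / (K : ℝ) with hθ
      have hU := Polynomial.Chebyshev.U_real_cos θ ((K-1 : ℕ) : ℤ)
      have hcast : (((K-1 : ℕ) : ℤ) : ℝ) + 1 = (K : ℝ) := by
        push_cast [Nat.cast_sub hK]
        ring
      have hzero : Real.sin ((K : ℝ) * θ) = 0 := by
        have : (K : ℝ) * θ = ((α : ℕ) : ℝ) * Real.pi := by
          rw [hθ]; field_simp
        rw [this, Real.sin_nat_mul_pi]
      rw [hcast] at hU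
      have hsc : Real.sin θ ^ 2 + Real.cos θ ^ 2 = 1 := Real.sin_sq_add_cos_sq θ
      have : v α = Real.cos θ := rfl
      rw [this]
      simp only [eval_sub, eval_pow, eval_X, eval_one]
      linear_combination (- Real.sin θ) * hU
        + (Polynomial.Chebyshev.U ℝ (((K-1 : ℕ) : ℤ))).eval (Real.cos θ) * hsc
        - Real.sin θ * hzero
    rw [eval_sub, hevalA, hevalB, sub_zero]
  have h0 := eq_zero_of_degree_lt_of_eval_finset_eq_zero s hdlt heval
  exact sub_eq_zero.mp h0

theorem abs_sin_le_one' (t : ℝ) : |Real.sin t| ≤ 1 :=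
  abs_le.mpr ⟨Real.neg_one_le_sin t, Real.sin_le_one t⟩

theorem node_prod_bound (K : ℕ) (hK : 1 ≤ K) (x : ℝ) (hx : x ∈ Set.Icc (0:ℝ) 1) :
    |∏ α : Fin (K+1), (x - cheb K α)| ≤ ((1:ℝ)/4) ^ K := by
  obtain ⟨hx0, hx1⟩ := hx
  set θ := Real.arccos (1 - 2*x) with hθ
  have hcos : Real.cos θ = 1 - 2*x := Real.cos_arccos (by linarith) (by linarith)
  have hfac : ∀ α : Fin (K+1), x - cheb K α
      = (Real.cos (Real.pi * ((α:ℕ):ℝ) / K) - Real.cos θ) / 2 := by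
    intro α; rw [cheb, hcos]; ring
  have hprod : ∏ α : Fin (K+1), (x - cheb K α)
      = (∏ α : Fin (K+1), (Real.cos (Real.pi * ((α:ℕ):ℝ) / K) - Real.cos θ)) / 2^(K+1) := by
    rw [Finset.prod_congr rfl (fun α _ => hfac α), Finset.prod_div_distrib]
    congr 1
    rw [Finset.prod_const, Finset.card_univ, Fintype.card_fin]
  have hid := congrArg (Polynomial.eval (Real.cos θ)) (node_identity K hK)
  rw [eval_mul, eval_mul, eval_C, eval_prod] at hid
  simp only [eval_sub, eval_X, eval_C, eval_pow, eval_one] at hid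
  have hU := Polynomial.Chebyshev.U_real_cos θ ((K-1 : ℕ) : ℤ)
  have hcast : (((K-1 : ℕ) : ℤ) : ℝ) + 1 = (K : ℝ) := by
    push_cast [Nat.cast_sub hK]; ring
  rw [hcast] at hU
  have hsc := Real.sin_sq_add_cos_sq θ
  have hkey : (2:ℝ)^(K-1) * ∏ α : Fin (K+1), (Real.cos θ - Real.cos (Real.pi * ((α:ℕ):ℝ) / K))
      = - (Real.sin θ * Real.sin ((K:ℝ) * θ)) := by
    rw [hid]
    linear_combination (Polynomial.Chebyshev.U ℝ (((K-1):ℕ):ℤ)).eval (Real.cos θ) * hsc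
      - Real.sin θ * hU
  have habs : |∏ α : Fin (K+1), (Real.cos (Real.pi * ((α:ℕ):ℝ) / K) - Real.cos θ)|
      = |∏ α : Fin (K+1), (Real.cos θ - Real.cos (Real.pi * ((α:ℕ):ℝ) / K))| := by
    rw [Finset.abs_prod, Finset.abs_prod]
    exact Finset.prod_congr rfl (fun α _ => abs_sub_comm _ _)
  have h2pos : (0:ℝ) < 2^(K-1) := by positivity
  have hbound : |∏ α : Fin (K+1), (Real.cos θ - Real.cos (Real.pi * ((α:ℕ):ℝ) / K))|
      ≤ 1 / 2^(K-1) := by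
    rw [le_div_iff₀ h2pos, mul_comm]
    calc (2:ℝ)^(K-1) * |∏ α : Fin (K+1), (Real.cos θ - Real.cos (Real.pi * ((α:ℕ):ℝ) / K))|
        = |(2:ℝ)^(K-1) * ∏ α : Fin (K+1), (Real.cos θ - Real.cos (Real.pi * ((α:ℕ):ℝ) / K))| := by
          rw [abs_mul, abs_of_pos h2pos]
      _ = |Real.sin θ * Real.sin ((K:ℝ) * θ)| := by rw [hkey, abs_neg]
      _ ≤ 1 := by
          rw [abs_mul]
          exact mul_le_one₀ (abs_sin_le_one' _) (abs_nonneg _) (abs_sin_le_one' _)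
  have hexp : (2:ℝ)^(K-1) * 2^(K+1) = 4^K := by
    rw [← pow_add]
    have h2 : K - 1 + (K + 1) = 2 * K := by omega
    rw [h2, pow_mul]; norm_num
  calc |∏ α : Fin (K+1), (x - cheb K α)|
      = |∏ α : Fin (K+1), (Real.cos θ - Real.cos (Real.pi * ((α:ℕ):ℝ) / K))| / 2^(K+1) := by
        rw [hprod, abs_div, habs, abs_of_pos (by positivity : (0:ℝ) < 2^(K+1))]
    _ ≤ (1 / 2^(K-1)) / 2^(K+1) := by gcongr
    _ = ((1:ℝ)/4) ^ K := by
        rw [div_div, hexp, one_div, ← inv_pow]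
        norm_num

theorem interp_remainder (K : ℕ) (f : ℝ → ℝ) (hf : ContDiff ℝ ∞ f)
    (v : Fin (K+1) → ℝ) (hv : Function.Injective v) (hvI : ∀ α, v α ∈ Set.Icc (0:ℝ) 1)
    (x : ℝ) (hx : x ∈ Set.Icc (0:ℝ) 1) (M : ℝ)
    (hM : ∀ t ∈ Set.Icc (0:ℝ) 1, |iteratedDeriv (K+1) f t| ≤ M) :
    |f x - ∑ α : Fin (K+1), f (v α) * (Lagrange.basis Finset.univ v α).eval x|
      ≤ M / (Nat.factorial (K+1) : ℝ) * |∏ α : Fin (K+1), (x - v α)| := by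
  have hvinj : Set.InjOn v ↑(Finset.univ : Finset (Fin (K+1))) := hv.injOn
  set p : ℝ[X] := Lagrange.interpolate Finset.univ v (fun α => f (v α)) with hp
  have hpeval : ∀ z : ℝ, p.eval z = ∑ α : Fin (K+1), f (v α) * (Lagrange.basis Finset.univ v α).eval z := by
    intro z
    rw [hp, Lagrange.interpolate_apply, eval_finset_sum]
    exact Finset.sum_congr rfl (fun α _ => by rw [eval_mul, eval_C])
  have hpnode : ∀ α, p.eval (v α) = f (v α) := by
    intro α
    rw [hp, Lagrange.eval_interpolate_at_node _ hvinj (Finset.mem_univ α)]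
  have hMnonneg : 0 ≤ M := le_trans (abs_nonneg _) (hM 0 (by constructor <;> norm_num))
  by_cases hxv : ∃ β, x = v β
  · obtain ⟨β, rfl⟩ := hxv
    rw [← hpeval, hpnode, sub_self, abs_zero]
    positivity
  · -- x is not a node
    push_neg at hxv
    set W : ℝ[X] := ∏ α : Fin (K+1), (X - C (v α)) with hW
    have hWeval : ∀ z : ℝ, W.eval z = ∏ α : Fin (K+1), (z - v α) := by
      intro z; rw [hW, eval_prod]; simp
    have hWx : W.eval x ≠ 0 := by
      rw [hWeval]
      exact Finset.prod_ne_zero_iff.mpr (fun α _ => sub_ne_zero.mpr (hxv α))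
    set lam : ℝ := (f x - p.eval x) / W.eval x with hlam
    set q : ℝ[X] := p + C lam * W with hqdef
    set F : ℝ → ℝ := fun t => f t - q.eval t with hF
    -- zeros of F
    set s : Finset ℝ := insert x (Finset.image v Finset.univ) with hs
    have hxnot : x ∉ Finset.image v Finset.univ := by
      rw [Finset.mem_image]; push_neg; intro α _; exact fun h => hxv α h.symm
    have hscard : s.card = K + 2 := by
      rw [hs, Finset.card_insert_of_notMem hxnot,
        Finset.card_image_of_injective _ hv, Finset.card_univ, Fintype.card_fin]
    have hssub : (↑s : Set ℝ) ⊆ Set.Icc 0 1 := by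
      intro z hz
      simp only [hs, Finset.coe_insert, Set.mem_insert_iff, Finset.coe_image, Set.mem_image] at hz
      rcases hz with rfl | ⟨α, _, rfl⟩
      · exact hx
      · exact hvI α
    have hFzero : ∀ z ∈ s, F z = 0 := by
      intro z hz
      simp only [hs, Finset.mem_insert, Finset.mem_image] at hz
      rcases hz with rfl | ⟨α, _, rfl⟩
      · simp only [hF, hqdef, eval_add, eval_mul, eval_C]
        rw [hlam]
        field_simp
        ring
      · simp only [hF, hqdef, eval_add, eval_mul, eval_C]
        rw [hpnode, hWeval]
        rw [Finset.prod_eq_zero (Finset.mem_univ α) (sub_self (v α))]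
        ring
    have hFcd : ContDiff ℝ ∞ F := hf.sub (polyEval_contDiff q)
    obtain ⟨c, hcI, hc0⟩ := genRolle (K+1) F hFcd 0 1 s (by omega)  hssub hFzero
    -- compute the iterated derivative of F
    have hadd : ∀ (n : ℕ) (u w : ℝ[X]), Polynomial.derivative^[n] (u + w)
        = Polynomial.derivative^[n] u + Polynomial.derivative^[n] w := by
      intro n
      induction n with
      | zero => intro u w; simp
      | succ n ih =>
        intro u w
        rw [Function.iterate_succ_apply, Function.iterate_succ_apply,
          Function.iterate_succ_apply, derivative_add, ih]
    have hpdeg : p.natDegree < K + 1 := by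
      have hdeg := Lagrange.degree_interpolate_lt (r := fun α => f (v α)) (v := v) hvinj
      rw [Finset.card_univ, Fintype.card_fin] at hdeg
      by_cases hp0 : p = 0
      · rw [hp0]; simp
      · exact (natDegree_lt_iff_degree_lt hp0).mpr hdeg
    have hderp : Polynomial.derivative^[K+1] p = 0 := iterate_derivative_eq_zero hpdeg
    have hWmonic : W.Monic := monic_prod_of_monic _ _ (fun α _ => monic_X_sub_C _)
    have hWdeg : W.natDegree = K + 1 := by
      rw [hW, natDegree_prod _ _ (fun α _ => X_sub_C_ne_zero _)]
      simp
    have hderX : Polynomial.derivative^[K+1] ((X : ℝ[X]) ^ (K+1))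
        = C ((Nat.factorial (K+1) : ℝ)) := by
      rw [iterate_derivative_X_pow_eq_smul, Nat.descFactorial_self, Nat.sub_self, pow_zero,
        smul_eq_C_mul, mul_one]
    have hrdeg : (W - X ^ (K+1)).natDegree < K + 1 := by
      by_cases hr0 : W - X ^ (K+1) = 0
      · rw [hr0]; simp
      · apply (natDegree_lt_iff_degree_lt hr0).mpr
        have hd : W.degree = ((X : ℝ[X]) ^ (K+1)).degree := by
          rw [degree_eq_natDegree hWmonic.ne_zero, hWdeg, degree_X_pow]
        have := degree_sub_lt hd hWmonic.ne_zero
          (by rw [hWmonic.leadingCoeff, (monic_X_pow (K+1)).leadingCoeff])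
        rwa [degree_eq_natDegree hWmonic.ne_zero, hWdeg] at this
    have hderr : Polynomial.derivative^[K+1] (W - X ^ (K+1)) = 0 :=
      iterate_derivative_eq_zero hrdeg
    have hderW : Polynomial.derivative^[K+1] W = C ((Nat.factorial (K+1) : ℝ)) := by
      have hWsplit : W = (W - X ^ (K+1)) + X ^ (K+1) := by ring
      rw [show Polynomial.derivative^[K+1] W = Polynomial.derivative^[K+1] ((W - X ^ (K+1)) + X ^ (K+1)) from by rw [← hWsplit],
        hadd, hderr, hderX, zero_add]
    have hqder : (Polynomial.derivative^[K+1] q) = C (lam * (Nat.factorial (K+1) : ℝ)) := by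
      rw [hqdef, hadd, hderp, iterate_derivative_C_mul, hderW, zero_add, ← C_mul]
    have hiter := iteratedDeriv_sub_polyEval f hf q (K+1)
    rw [hF] at hc0
    rw [hiter] at hc0
    simp only [hqder, eval_C] at hc0
    -- conclude
    have hlameq : lam = iteratedDeriv (K+1) f c / (Nat.factorial (K+1) : ℝ) := by
      have hfactpos : (0:ℝ) < (Nat.factorial (K+1) : ℝ) := by
        exact_mod_cast Nat.factorial_pos (K+1)
      field_simp at hc0 ⊢
      linarith
    have herr : f x - p.eval x = lam * W.eval x := by
      rw [hlam]; field_simp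
    rw [← hpeval, herr, abs_mul, hlameq, abs_div]
    rw [hWeval]
    have hfactpos : (0:ℝ) < (Nat.factorial (K+1) : ℝ) := by
      exact_mod_cast Nat.factorial_pos (K+1)
    rw [abs_of_pos hfactpos]
    gcongr
    exact hM c hcI

theorem coslin_contDiff (a c : ℝ) : ContDiff ℝ ∞ (fun t : ℝ => Real.cos (a * t + c)) :=
  Real.contDiff_cos.comp ((contDiff_const.mul contDiff_id).add contDiff_const)

theorem iteratedDeriv_cos_lin (a c : ℝ) : ∀ n : ℕ,
    iteratedDeriv n (fun t => Real.cos (a * t + c))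
      = fun t => a ^ n * Real.cos (a * t + c + n * (Real.pi / 2)) := by
  intro n
  induction n with
  | zero => funext t; simp
  | succ n ih =>
    rw [iteratedDeriv_succ, ih]
    funext t
    have h1 : HasDerivAt (fun t : ℝ => a * t + c + (n : ℝ) * (Real.pi/2)) a t := by
      simpa using (((hasDerivAt_id t).const_mul a).add_const c).add_const ((n:ℝ) * (Real.pi/2))
    have h2 : HasDerivAt (fun t : ℝ => a ^ n * Real.cos (a * t + c + (n:ℝ) * (Real.pi/2)))
        (a ^ n * (-Real.sin (a * t + c + (n:ℝ) * (Real.pi/2)) * a)) t := (h1.cos).const_mul _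
    rw [h2.deriv]
    push_cast
    rw [show a * t + c + ((n:ℝ) + 1) * (Real.pi/2)
        = (a * t + c + (n:ℝ) * (Real.pi/2)) + Real.pi/2 by ring, Real.cos_add_pi_div_two]
    ring

theorem pow_aux : ∀ n : ℕ, ((2:ℝ) * Real.pi)^(n+1) * ((1:ℝ)/4)^n = 4 * (Real.pi/2)^(n+1) := by
  intro n
  induction n with
  | zero => norm_num; ring
  | succ n ih =>
    rw [pow_succ (2*Real.pi) (n+1), pow_succ ((1:ℝ)/4) n, pow_succ (Real.pi/2) (n+1)]
    linear_combination (Real.pi/2) * ih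

theorem two_term_exp (K : ℕ) (hK : 1 ≤ K) :
    (K:ℝ)^K / (Nat.factorial K : ℝ) + (K:ℝ)^(K+1) / (Nat.factorial (K+1) : ℝ) ≤ Real.exp K := by
  have h := Real.sum_le_exp_of_nonneg (x := (K:ℝ)) (by positivity) (K+2)
  refine le_trans ?_ h
  have hsub : ({K, K+1} : Finset ℕ) ⊆ Finset.range (K+2) := by
    intro i hi
    simp only [Finset.mem_insert, Finset.mem_singleton] at hi
    rcases hi with rfl | rfl <;> simp [Finset.mem_range] <;> omega
  have hpair : ∑ i ∈ ({K, K+1} : Finset ℕ), (K:ℝ)^i / (Nat.factorial i : ℝ)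
      = (K:ℝ)^K / (Nat.factorial K : ℝ) + (K:ℝ)^(K+1) / (Nat.factorial (K+1) : ℝ) := by
    rw [Finset.sum_pair (by omega)]
  rw [← hpair]
  apply Finset.sum_le_sum_of_subset_of_nonneg hsub
  intro i _ _
  positivity

theorem final_ineq (K : ℕ) (hK : 2 ≤ K) :
    2 * ((2 * Real.pi)^(K+1) / (Nat.factorial (K+1) : ℝ) * ((1:ℝ)/4)^K)
      ≤ 4 * (Real.pi / 2) ^ (K + 1) * Real.exp (K : ℝ) /
        (((K : ℝ) ^ K) * ((K : ℝ) - Real.pi / 2)) := by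
  have hπ := Real.pi_pos
  have hπ4 : Real.pi < 4 := by linarith [Real.pi_lt_d2]
  have hK2 : (2:ℝ) ≤ (K:ℝ) := by exact_mod_cast hK
  have hKπ : 0 < (K:ℝ) - Real.pi/2 := by linarith
  have hKpow : (0:ℝ) < (K:ℝ)^K := by positivity
  have hfact : (0:ℝ) < (Nat.factorial (K+1) : ℝ) := by exact_mod_cast Nat.factorial_pos (K+1)
  have hfactK : (0:ℝ) < (Nat.factorial K : ℝ) := by exact_mod_cast Nat.factorial_pos K
  have hpow2 : (0:ℝ) < (Real.pi/2)^(K+1) := by positivity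
  have hLHS : 2 * ((2 * Real.pi)^(K+1) / (Nat.factorial (K+1) : ℝ) * ((1:ℝ)/4)^K)
      = 8 * (Real.pi/2)^(K+1) / (Nat.factorial (K+1) : ℝ) := by
    rw [div_mul_eq_mul_div, pow_aux K]
    ring
  rw [hLHS, div_le_div_iff₀ hfact (by positivity)]
  -- key : 2 * (K^K * (K - π/2)) ≤ exp K * (K+1)!
  have hfs : (Nat.factorial (K+1) : ℝ) = ((K:ℝ)+1) * (Nat.factorial K : ℝ) := by
    rw [Nat.factorial_succ]; push_cast; ring
  have htwo := two_term_exp K (by omega)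
  have key : 2 * ((K:ℝ)^K * ((K:ℝ) - Real.pi/2)) ≤ Real.exp (K:ℝ) * (Nat.factorial (K+1) : ℝ) := by
    have h1 : ((K:ℝ)^K / (Nat.factorial K : ℝ) + (K:ℝ)^(K+1) / (Nat.factorial (K+1) : ℝ))
        * (Nat.factorial (K+1) : ℝ) ≤ Real.exp (K:ℝ) * (Nat.factorial (K+1) : ℝ) := by
      gcongr
    have h2 : ((K:ℝ)^K / (Nat.factorial K : ℝ) + (K:ℝ)^(K+1) / (Nat.factorial (K+1) : ℝ))
        * (Nat.factorial (K+1) : ℝ) = (K:ℝ)^K * ((K:ℝ)+1) + (K:ℝ)^(K+1) := by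
      rw [hfs]
      field_simp
    rw [h2] at h1
    have h3 : 2 * ((K:ℝ)^K * ((K:ℝ) - Real.pi/2)) ≤ (K:ℝ)^K * ((K:ℝ)+1) + (K:ℝ)^(K+1) := by
      have : (K:ℝ)^(K+1) = (K:ℝ)^K * (K:ℝ) := by ring
      rw [this]
      nlinarith [hKpow, hπ]
    linarith
  calc 8 * (Real.pi/2)^(K+1) * ((K:ℝ)^K * ((K:ℝ) - Real.pi/2))
      = 4 * (Real.pi/2)^(K+1) * (2 * ((K:ℝ)^K * ((K:ℝ) - Real.pi/2))) := by ring
    _ ≤ 4 * (Real.pi/2)^(K+1) * (Real.exp (K:ℝ) * (Nat.factorial (K+1) : ℝ)) := by gcongr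
    _ = 4 * (Real.pi/2)^(K+1) * Real.exp (K:ℝ) * (Nat.factorial (K+1) : ℝ) := by ring

/-- For `K ≥ 2` and `x, y ∈ [0,1]`, the `(K+1)`-point Chebyshev–Lobatto
interpolation error of `f_y(x) = exp(−2πixy)` is at most
`4·(π/2)^(K+1)·e^K·K^(−K) / (K − π/2)`. -/
theorem chebyshev_interp_error (K : ℕ) (hK : 2 ≤ K) (x y : ℝ)
    (hx : x ∈ Set.Icc (0 : ℝ) 1) (hy : y ∈ Set.Icc (0 : ℝ) 1) :
    ‖Complex.exp (-2 * (Real.pi : ℂ) * Complex.I * (x : ℂ) * (y : ℂ)) -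
        ∑ α : Fin (K + 1),
          Complex.exp (-2 * (Real.pi : ℂ) * Complex.I * (y : ℂ) * ((cheb K α : ℝ) : ℂ)) *
            ((chebP K α x : ℝ) : ℂ)‖ ≤
      4 * (Real.pi / 2) ^ (K + 1) * Real.exp (K : ℝ) /
        (((K : ℝ) ^ K) * ((K : ℝ) - Real.pi / 2)) := by
  have hπ := Real.pi_pos
  have hK1 : 1 ≤ K := by omega
  have hvinj : Function.Injective (cheb K) := by
    intro α β h
    apply cos_theta_inj K hK1
    simp only [cheb] at h
    simp only
    linarith
  have hvI : ∀ α, cheb K α ∈ Set.Icc (0:ℝ) 1 := by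
    intro α
    have h1 := Real.neg_one_le_cos (Real.pi * ((α:ℕ):ℝ) / K)
    have h2 := Real.cos_le_one (Real.pi * ((α:ℕ):ℝ) / K)
    constructor
    · simp only [cheb]; linarith
    · simp only [cheb]; linarith
  set a : ℝ := 2 * Real.pi * y with ha
  have hbound : ∀ c₀ : ℝ, ∀ t ∈ Set.Icc (0:ℝ) 1,
      |iteratedDeriv (K+1) (fun t => Real.cos (a*t+c₀)) t| ≤ (2*Real.pi)^(K+1) := by
    intro c₀ t ht
    rw [iteratedDeriv_cos_lin]
    simp only
    rw [abs_mul, abs_pow]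
    have h1 : |a| ≤ 2*Real.pi := by
      rw [ha, abs_mul, abs_of_pos (by positivity : (0:ℝ) < 2*Real.pi)]
      have : |y| ≤ 1 := abs_le.mpr ⟨by linarith [hy.1], hy.2⟩
      nlinarith
    calc |a|^(K+1) * |Real.cos (a*t+c₀+((K+1:ℕ):ℝ)*(Real.pi/2))| ≤ (2*Real.pi)^(K+1) * 1 := by
          apply mul_le_mul (pow_le_pow_left₀ (abs_nonneg _) h1 _)
            (abs_le.mpr ⟨Real.neg_one_le_cos _, Real.cos_le_one _⟩) (abs_nonneg _) (by positivity)
      _ = (2*Real.pi)^(K+1) := mul_one _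
  have hEre : |Real.cos (a*x+0) - ∑ α : Fin (K+1), Real.cos (a * cheb K α + 0) *
      (Lagrange.basis Finset.univ (cheb K) α).eval x|
      ≤ (2*Real.pi)^(K+1) / (Nat.factorial (K+1) : ℝ) * |∏ α : Fin (K+1), (x - cheb K α)| := by
    simpa using interp_remainder K (fun t => Real.cos (a*t+0)) (coslin_contDiff a 0) (cheb K)
      hvinj hvI x hx ((2*Real.pi)^(K+1)) (hbound 0)
  have hEim : |Real.cos (a*x+Real.pi/2) - ∑ α : Fin (K+1), Real.cos (a * cheb K α + Real.pi/2) *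
      (Lagrange.basis Finset.univ (cheb K) α).eval x|
      ≤ (2*Real.pi)^(K+1) / (Nat.factorial (K+1) : ℝ) * |∏ α : Fin (K+1), (x - cheb K α)| := by
    simpa using interp_remainder K (fun t => Real.cos (a*t+Real.pi/2))
      (coslin_contDiff a (Real.pi/2)) (cheb K) hvinj hvI x hx ((2*Real.pi)^(K+1))
      (hbound (Real.pi/2))
  have hnode := node_prod_bound K hK1 x hx
  set A : ℝ := Real.cos (a*x+0) - ∑ α : Fin (K+1), Real.cos (a * cheb K α + 0) *
    (Lagrange.basis Finset.univ (cheb K) α).eval x with hA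
  set B : ℝ := Real.cos (a*x+Real.pi/2) - ∑ α : Fin (K+1), Real.cos (a * cheb K α + Real.pi/2) *
    (Lagrange.basis Finset.univ (cheb K) α).eval x with hB
  have hexpI : ∀ r : ℝ, Complex.exp (-(r : ℂ) * Complex.I)
      = ((Real.cos (r + 0) : ℝ) : ℂ) + ((Real.cos (r + Real.pi/2) : ℝ) : ℂ) * Complex.I := by
    intro r
    rw [show (-(r:ℂ) * Complex.I) = ((-r : ℝ) : ℂ) * Complex.I by push_cast; ring,
      Complex.exp_mul_I]
    rw [show Real.cos (r + 0) = Real.cos (-r) by rw [add_zero, Real.cos_neg],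
      show Real.cos (r + Real.pi/2) = Real.sin (-r) by
        rw [Real.cos_add_pi_div_two, Real.sin_neg]]
    rw [← Complex.ofReal_cos, ← Complex.ofReal_sin]
  have hdecomp : Complex.exp (-2 * (Real.pi : ℂ) * Complex.I * (x : ℂ) * (y : ℂ)) -
        ∑ α : Fin (K + 1),
          Complex.exp (-2 * (Real.pi : ℂ) * Complex.I * (y : ℂ) * ((cheb K α : ℝ) : ℂ)) *
            ((chebP K α x : ℝ) : ℂ)
      = (A : ℂ) + (B : ℂ) * Complex.I := by
    have h1 : (-2 * (Real.pi : ℂ) * Complex.I * (x : ℂ) * (y : ℂ))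
        = -((a*x : ℝ):ℂ) * Complex.I := by
      rw [ha]; push_cast; ring
    have h2 : ∀ α : Fin (K+1), (-2 * (Real.pi : ℂ) * Complex.I * (y : ℂ) * ((cheb K α : ℝ) : ℂ))
        = -((a * cheb K α : ℝ):ℂ) * Complex.I := by
      intro α; rw [ha]; push_cast; ring
    rw [h1, hexpI]
    rw [Finset.sum_congr rfl (fun α _ => by rw [h2 α, hexpI (a * cheb K α)])]
    have hsum : ∑ α : Fin (K+1),
        (((Real.cos (a * cheb K α + 0) : ℝ) : ℂ)
          + ((Real.cos (a * cheb K α + Real.pi/2) : ℝ) : ℂ) * Complex.I) * ((chebP K α x : ℝ) : ℂ)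
        = ((∑ α : Fin (K+1), Real.cos (a * cheb K α + 0) *
            (Lagrange.basis Finset.univ (cheb K) α).eval x : ℝ) : ℂ)
          + ((∑ α : Fin (K+1), Real.cos (a * cheb K α + Real.pi/2) *
            (Lagrange.basis Finset.univ (cheb K) α).eval x : ℝ) : ℂ) * Complex.I := by
      rw [Complex.ofReal_sum, Complex.ofReal_sum, Finset.sum_mul, ← Finset.sum_add_distrib]
      apply Finset.sum_congr rfl
      intro α _
      simp only [chebP]
      push_cast
      ring
    rw [hsum, hA, hB]
    push_cast
    ring
  rw [hdecomp]
  calc ‖(A : ℂ) + (B : ℂ) * Complex.I‖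
      ≤ ‖(A : ℂ)‖ + ‖(B : ℂ) * Complex.I‖ := norm_add_le _ _
    _ = |A| + |B| := by
        rw [norm_mul, Complex.norm_I, mul_one]; simp
    _ ≤ 2 * ((2*Real.pi)^(K+1) / (Nat.factorial (K+1) : ℝ) * ((1:ℝ)/4)^K) := by
        have hM0 : (0:ℝ) ≤ (2*Real.pi)^(K+1) / (Nat.factorial (K+1) : ℝ) := by positivity
        have hA1 : |A| ≤ (2*Real.pi)^(K+1) / (Nat.factorial (K+1) : ℝ) * ((1:ℝ)/4)^K :=
          le_trans hEre (by apply mul_le_mul_of_nonneg_left hnode hM0)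
        have hB1 : |B| ≤ (2*Real.pi)^(K+1) / (Nat.factorial (K+1) : ℝ) * ((1:ℝ)/4)^K :=
          le_trans hEim (by apply mul_le_mul_of_nonneg_left hnode hM0)
        linarith
    _ ≤ 4 * (Real.pi / 2) ^ (K + 1) * Real.exp (K : ℝ) /
        (((K : ℝ) ^ K) * ((K : ℝ) - Real.pi / 2)) := final_ineq K hK
end

section
/- Let m ≥ 1 be an integer, σ_1, …, σ_{m+1}, τ_1, …, τ_{m+1} ∈ {0,1}, and let c be any real number. Set y_{≤m} = Σ_{l=1}^{m} 2^{l−m−1}·τ_l and y_{≤m+1} = Σ_{l=1}^{m+1} 2^{l−m−2}·τ_l. Then exp(−πi·Σ_{k=1}^{m+1} Σ_{l=1}^{m+1} 2^{−k}·2^{l}·σ_k·τ_l)·exp(−2πi·y_{≤m+1}·c) = exp(−πi·Σ_{k=1}^{m} Σ_{l=1}^{m} 2^{−k}·2^{l}·σ_k·τ_l)·exp(−2πi·y_{≤m}·(σ_{m+1}+c)/2)·exp(−πi·τ_{m+1}·(σ_{m+1}+c)). -/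
/-- The one-step recursion underlying the interpolative MPO construction
of the QFT: with `y_{≤m} = Σ_{l=1}^m 2^{l−m−1} τ_l` and
`y_{≤m+1} = Σ_{l=1}^{m+1} 2^{l−m−2} τ_l`, for any real `c`,
`exp(−πi Σ_{k,l=1}^{m+1} 2^{l−k} σ_k τ_l)·exp(−2πi y_{≤m+1} c)
  = exp(−πi Σ_{k,l=1}^{m} 2^{l−k} σ_k τ_l)·exp(−2πi y_{≤m} (σ_{m+1}+c)/2)
    ·exp(−πi τ_{m+1}(σ_{m+1}+c))`. -/
theorem qft_mpo_one_step (m : ℕ) (hm : 1 ≤ m) (σ τ : Fin (m + 1) → Fin 2) (c : ℝ) :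
    Complex.exp (-(Real.pi : ℂ) * Complex.I *
        ((∑ k : Fin (m + 1), ∑ l : Fin (m + 1),
          (2 : ℝ) ^ ((l : ℕ) + 1) / (2 : ℝ) ^ ((k : ℕ) + 1) *
            ((σ k : ℕ) : ℝ) * ((τ l : ℕ) : ℝ) : ℝ) : ℂ)) *
      Complex.exp (-2 * (Real.pi : ℂ) * Complex.I *
        ((∑ l : Fin (m + 1),
          (2 : ℝ) ^ ((l : ℕ) + 1) / (2 : ℝ) ^ (m + 2) * ((τ l : ℕ) : ℝ) : ℝ) : ℂ) *
        (c : ℂ)) =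
    Complex.exp (-(Real.pi : ℂ) * Complex.I *
        ((∑ k : Fin m, ∑ l : Fin m,
          (2 : ℝ) ^ ((l : ℕ) + 1) / (2 : ℝ) ^ ((k : ℕ) + 1) *
            ((σ k.castSucc : ℕ) : ℝ) * ((τ l.castSucc : ℕ) : ℝ) : ℝ) : ℂ)) *
      Complex.exp (-2 * (Real.pi : ℂ) * Complex.I *
        ((∑ l : Fin m,
          (2 : ℝ) ^ ((l : ℕ) + 1) / (2 : ℝ) ^ (m + 1) * ((τ l.castSucc : ℕ) : ℝ) : ℝ) : ℂ) *
        ((((σ (Fin.last m) : ℕ) : ℂ) + (c : ℂ)) / 2)) *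
      Complex.exp (-(Real.pi : ℂ) * Complex.I * ((τ (Fin.last m) : ℕ) : ℂ) *
        (((σ (Fin.last m) : ℕ) : ℂ) + (c : ℂ))) := by
  rw [← Complex.exp_add, ← Complex.exp_add, ← Complex.exp_add,
      Complex.exp_eq_exp_iff_exists_int]
  refine ⟨-((τ (Fin.last m) : ℤ) * ∑ k : Fin m, 2 ^ (m - 1 - (k:ℕ)) * (σ k.castSucc : ℤ)), ?_⟩
  simp only [Fin.sum_univ_castSucc]
  push_cast
  simp only [Fin.coe_castSucc, Fin.val_last, Finset.sum_add_distrib]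
  have h2 : (2:ℂ) ≠ 0 := two_ne_zero
  have hB : (∑ x : Fin m, (2:ℂ)^(m+1)/2^((x:ℕ)+1) * ((σ x.castSucc : ℕ):ℂ) * ((τ (Fin.last m) : ℕ):ℂ))
      = 2 * ((τ (Fin.last m) : ℕ):ℂ) * ∑ x : Fin m, 2^(m-1-(x:ℕ)) * ((σ x.castSucc : ℕ):ℂ) := by
    rw [Finset.mul_sum]
    refine Finset.sum_congr rfl fun k _ => ?_
    have hk : m + 1 = 1 + (m - 1 - (k:ℕ)) + ((k:ℕ) + 1) := by have := k.isLt; omega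
    rw [hk, pow_add, pow_add]
    field_simp
  have hC : (∑ x : Fin m, (2:ℂ)^((x:ℕ)+1)/2^(m+1) * ((σ (Fin.last m) : ℕ):ℂ) * ((τ x.castSucc : ℕ):ℂ))
      = ((σ (Fin.last m) : ℕ):ℂ) * ∑ x : Fin m, 2^((x:ℕ)+1)/2^(m+1) * ((τ x.castSucc : ℕ):ℂ) := by
    rw [Finset.mul_sum]
    exact Finset.sum_congr rfl fun k _ => by ring
  have hY : (∑ x : Fin m, (2:ℂ)^((x:ℕ)+1)/2^(m+2) * ((τ x.castSucc : ℕ):ℂ))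
      = (∑ x : Fin m, 2^((x:ℕ)+1)/2^(m+1) * ((τ x.castSucc : ℕ):ℂ)) / 2 := by
    rw [Finset.sum_div]
    refine Finset.sum_congr rfl fun k _ => ?_
    rw [pow_succ (2:ℂ) (m+1)]
    field_simp
  have hD : (2:ℂ)^(m+1)/2^(m+1) = 1 := div_self (pow_ne_zero _ h2)
  have hE : (2:ℂ)^(m+1)/2^(m+2) = 1/2 := by
    rw [pow_succ (2:ℂ) (m+1)]
    field_simp
  rw [hB, hC, hY, hD, hE]
  ring
end

section
/- Let n ≥ 2 and K ≥ 1 be integers. Define the Lebesgue constant Λ_K = sup_{x∈[0,1]} Σ_{α=0}^{K} |P^α(x)| and the worst-case interpolation error E_K = sup_{x,y∈[0,1]} |exp(−2πixy) − Σ_{α=0}^{K} exp(−2πi·y·c^α)·P^α(x)|. Then for all bit strings σ, τ ∈ {0,1}^n, |F_MPO(σ_{1:n}, τ_{1:n}) − F(σ_{1:n}, τ_{1:n})| ≤ E_K · Σ_{p=0}^{n−2} Λ_K^p. -/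
/-- The internal MPO core `A^{αβ}(σ,τ) = P^α((σ+c^β)/2)·exp(−πi(σ+c^β)τ)`. -/
noncomputable def Acore (K : ℕ) (α β : Fin (K + 1)) (σ τ : Fin 2) : ℂ :=
  ((chebP K α ((((σ : ℕ) : ℝ) + cheb K β) / 2) : ℝ) : ℂ) *
    Complex.exp (-(Real.pi : ℂ) * Complex.I *
      (((((σ : ℕ) : ℝ) + cheb K β : ℝ) : ℂ)) * ((τ : ℕ) : ℂ))

/-- The leftmost MPO core `A_L^β(σ,τ) = exp(−πi(σ+c^β)τ)`. -/
noncomputable def AL (K : ℕ) (β : Fin (K + 1)) (σ τ : Fin 2) : ℂ :=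
  Complex.exp (-(Real.pi : ℂ) * Complex.I *
    (((((σ : ℕ) : ℝ) + cheb K β : ℝ) : ℂ)) * ((τ : ℕ) : ℂ))

/-- The rightmost MPO core `A_R^α(σ,τ) = P^α(σ/2)·exp(−πiστ)`. -/
noncomputable def AR (K : ℕ) (α : Fin (K + 1)) (σ τ : Fin 2) : ℂ :=
  ((chebP K α (((σ : ℕ) : ℝ) / 2) : ℝ) : ℂ) *
    Complex.exp (-(Real.pi : ℂ) * Complex.I * ((σ : ℕ) : ℂ) * ((τ : ℕ) : ℂ))

/-- The MPO approximation
`F_MPO(σ,τ) = Σ_{α_1,…,α_{n−1}} A_L^{α_1}(σ_1,τ_1)·Π_{m=2}^{n−1} A^{α_{m−1}α_m}(σ_m,τ_m)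
  ·A_R^{α_{n−1}}(σ_n,τ_n)`. -/
noncomputable def Fmpo (n K : ℕ) (hn : 2 ≤ n) (σ τ : Fin n → Fin 2) : ℂ :=
  ∑ a : Fin (n - 1) → Fin (K + 1),
    AL K (a ⟨0, by omega⟩) (σ ⟨0, by omega⟩) (τ ⟨0, by omega⟩) *
      (∏ i : Fin (n - 2),
        Acore K (a ⟨i, by have := i.2; omega⟩) (a ⟨(i : ℕ) + 1, by have := i.2; omega⟩)
          (σ ⟨(i : ℕ) + 1, by have := i.2; omega⟩) (τ ⟨(i : ℕ) + 1, by have := i.2; omega⟩)) *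
      AR K (a ⟨n - 2, by omega⟩) (σ ⟨n - 1, by omega⟩) (τ ⟨n - 1, by omega⟩)

/-- The DFT/QFT tensor `F(σ,τ) = exp(−πi Σ_{k,l=1}^n 2^{−k} 2^{l} σ_k τ_l)`. -/
noncomputable def dftF (n : ℕ) (σ τ : Fin n → Fin 2) : ℂ :=
  Complex.exp (-(Real.pi : ℂ) * Complex.I *
    ((∑ k : Fin n, ∑ l : Fin n,
      (2 : ℝ) ^ ((l : ℕ) + 1) / (2 : ℝ) ^ ((k : ℕ) + 1) *
        ((σ k : ℕ) : ℝ) * ((τ l : ℕ) : ℝ) : ℝ) : ℂ))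

/-- The Lebesgue constant `Λ_K = sup_{x∈[0,1]} Σ_α |P^α(x)|`. -/
noncomputable def Lambda (K : ℕ) : ℝ :=
  sSup ((fun x => ∑ α : Fin (K + 1), |chebP K α x|) '' Set.Icc 0 1)

/-- The worst-case interpolation error
`E_K = sup_{x,y∈[0,1]} |exp(−2πixy) − Σ_α exp(−2πi y c^α) P^α(x)|`. -/
noncomputable def Eworst (K : ℕ) : ℝ :=
  sSup ((fun p : ℝ × ℝ =>
      ‖Complex.exp (-2 * (Real.pi : ℂ) * Complex.I * (p.1 : ℂ) * (p.2 : ℂ)) -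
        ∑ α : Fin (K + 1),
          Complex.exp (-2 * (Real.pi : ℂ) * Complex.I * (p.2 : ℂ) * ((cheb K α : ℝ) : ℂ)) *
            ((chebP K α p.1 : ℝ) : ℂ)‖) '' (Set.Icc 0 1 ×ˢ Set.Icc 0 1))

noncomputable def E1 (a : ℝ) (t : Fin 2) : ℂ :=
  Complex.exp (-(Real.pi : ℂ) * Complex.I * (a : ℂ) * ((t : ℕ) : ℂ))

lemma abs_E1 (a : ℝ) (t : Fin 2) : ‖E1 a t‖ = 1 := by
  have h : (-(Real.pi : ℂ) * Complex.I * (a : ℂ) * ((t : ℕ) : ℂ)) =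
      ((-(Real.pi * a * ((t : ℕ) : ℝ)) : ℝ) : ℂ) * Complex.I := by push_cast; ring
  rw [E1, h, Complex.norm_exp_ofReal_mul_I]

lemma cheb_mem (K : ℕ) (α : Fin (K + 1)) : cheb K α ∈ Set.Icc (0:ℝ) 1 := by
  have h1 := Real.neg_one_le_cos (x := Real.pi * ((α : ℕ) : ℝ) / (K : ℝ))
  have h2 := Real.cos_le_one (Real.pi * ((α : ℕ) : ℝ) / (K : ℝ))
  constructor <;> [unfold cheb; unfold cheb] <;> nlinarith

@[fun_prop]

lemma chebP_continuous (K : ℕ) (α : Fin (K + 1)) : Continuous (chebP K α) :=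
  Polynomial.continuous _

lemma lambda_cont (K : ℕ) : Continuous fun x => ∑ α : Fin (K + 1), |chebP K α x| := by
  fun_prop

lemma eworst_cont (K : ℕ) : Continuous (fun p : ℝ × ℝ =>
      ‖Complex.exp (-2 * (Real.pi : ℂ) * Complex.I * (p.1 : ℂ) * (p.2 : ℂ)) -
        ∑ α : Fin (K + 1),
          Complex.exp (-2 * (Real.pi : ℂ) * Complex.I * (p.2 : ℂ) * ((cheb K α : ℝ) : ℂ)) *
            ((chebP K α p.1 : ℝ) : ℂ)‖) :=
  continuous_norm.comp (by fun_prop)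

lemma Lambda_ge (K : ℕ) {x : ℝ} (hx : x ∈ Set.Icc (0:ℝ) 1) :
    ∑ α : Fin (K + 1), |chebP K α x| ≤ Lambda K :=
  le_csSup (isCompact_Icc.bddAbove_image (lambda_cont K).continuousOn)
    (Set.mem_image_of_mem _ hx)

lemma Lambda_nonneg (K : ℕ) : 0 ≤ Lambda K :=
  le_trans (Finset.sum_nonneg fun α _ => abs_nonneg _) (Lambda_ge K ⟨le_refl 0, zero_le_one⟩)

lemma Eworst_ge (K : ℕ) {x y : ℝ} (hx : x ∈ Set.Icc (0:ℝ) 1) (hy : y ∈ Set.Icc (0:ℝ) 1) :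
    ‖Complex.exp (-2 * (Real.pi : ℂ) * Complex.I * (x : ℂ) * (y : ℂ)) -
        ∑ α : Fin (K + 1),
          Complex.exp (-2 * (Real.pi : ℂ) * Complex.I * (y : ℂ) * ((cheb K α : ℝ) : ℂ)) *
            ((chebP K α x : ℝ) : ℂ)‖ ≤ Eworst K := by
  apply le_csSup ((isCompact_Icc.prod isCompact_Icc).bddAbove_image (eworst_cont K).continuousOn)
  exact ⟨(x, y), Set.mk_mem_prod hx hy, rfl⟩

lemma Eworst_nonneg (K : ℕ) : 0 ≤ Eworst K :=
  le_trans (norm_nonneg _)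
    (Eworst_ge K (x := 0) (y := 0) ⟨le_refl 0, zero_le_one⟩ ⟨le_refl 0, zero_le_one⟩)

lemma Acore_eq (K : ℕ) (α β : Fin (K + 1)) (σ τ : Fin 2) :
    Acore K α β σ τ = ((chebP K α ((((σ : ℕ) : ℝ) + cheb K β) / 2) : ℝ) : ℂ) *
      E1 (((σ : ℕ) : ℝ) + cheb K β) τ := rfl

lemma AL_eq (K : ℕ) (β : Fin (K + 1)) (σ τ : Fin 2) :
    AL K β σ τ = E1 (((σ : ℕ) : ℝ) + cheb K β) τ := rfl

lemma AR_eq (K : ℕ) (α : Fin (K + 1)) (σ τ : Fin 2) :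
    AR K α σ τ = ((chebP K α (((σ : ℕ) : ℝ) / 2) : ℝ) : ℂ) * E1 ((σ : ℕ) : ℝ) τ := by
  rw [AR, E1]; norm_num

noncomputable def fex (s t : ℕ → Fin 2) : ℕ → ℝ → ℂ
  | 0, x => E1 (((s 0 : ℕ) : ℝ) + x) (t 0)
  | j+1, x => fex s t j ((((s (j+1) : ℕ) : ℝ) + x) / 2) *
      E1 (((s (j+1) : ℕ) : ℝ) + x) (t (j+1))

noncomputable def ell (K : ℕ) (s t : ℕ → Fin 2) : ℕ → ℝ → ℂ
  | 0, x => E1 (((s 0 : ℕ) : ℝ) + x) (t 0)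
  | j+1, x => (∑ α : Fin (K+1), ell K s t j (cheb K α) *
        ((chebP K α ((((s (j+1) : ℕ) : ℝ) + x) / 2) : ℝ) : ℂ)) *
      E1 (((s (j+1) : ℕ) : ℝ) + x) (t (j+1))

noncomputable def vec (K : ℕ) (s t : ℕ → Fin 2) : ℕ → Fin (K+1) → ℂ
  | 0, β => AL K β (s 0) (t 0)
  | j+1, β => ∑ α : Fin (K+1), vec K s t j α * Acore K α β (s (j+1)) (t (j+1))

lemma vec_eq_ell (K : ℕ) (s t : ℕ → Fin 2) (j : ℕ) (β : Fin (K+1)) :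
    vec K s t j β = ell K s t j (cheb K β) := by
  induction j generalizing β with
  | zero => rfl
  | succ j ih =>
    simp only [vec, ell, Acore_eq, ih, Finset.sum_mul, mul_assoc]

noncomputable def Tt (t : ℕ → Fin 2) : ℕ → ℝ
  | 0 => ((t 0 : ℕ) : ℝ)
  | j+1 => Tt t j / 2 + ((t (j+1) : ℕ) : ℝ)

noncomputable def Ss (s t : ℕ → Fin 2) : ℕ → ℝ
  | 0 => ((s 0 : ℕ) : ℝ) * ((t 0 : ℕ) : ℝ)
  | j+1 => Ss s t j + ((s (j+1) : ℕ) : ℝ) * Tt t (j+1)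

lemma fin2_le (u : Fin 2) : ((u : ℕ) : ℝ) ≤ 1 := by
  have := u.is_le; exact_mod_cast Nat.cast_le.mpr this

lemma Tt_nonneg (t : ℕ → Fin 2) (j : ℕ) : 0 ≤ Tt t j := by
  induction j with
  | zero => simp [Tt]
  | succ j ih => simp only [Tt]; positivity

lemma Tt_le_two (t : ℕ → Fin 2) (j : ℕ) : Tt t j ≤ 2 := by
  induction j with
  | zero => simpa [Tt] using (fin2_le (t 0)).trans one_le_two
  | succ j ih =>
    simp only [Tt]
    have := fin2_le (t (j+1)); linarith

lemma fex_formula (s t : ℕ → Fin 2) (j : ℕ) (x : ℝ) :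
    fex s t j x = Complex.exp (-(Real.pi : ℂ) * Complex.I *
      ((Ss s t j + x * Tt t j : ℝ) : ℂ)) := by
  induction j generalizing x with
  | zero =>
    rw [fex, E1, Ss, Tt]; congr 1; push_cast; ring
  | succ j ih =>
    rw [fex, ih, E1, ← Complex.exp_add]
    congr 1
    simp only [Ss, Tt]
    push_cast; ring

lemma fex_interp_err (K : ℕ) (s t : ℕ → Fin 2) (j : ℕ) {x : ℝ} (hx : x ∈ Set.Icc (0:ℝ) 1) :
    ‖(∑ α : Fin (K+1), fex s t j (cheb K α) * ((chebP K α x : ℝ) : ℂ))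
      - fex s t j x‖ ≤ Eworst K := by
  set y : ℝ := Tt t j / 2 with hy
  have hymem : y ∈ Set.Icc (0:ℝ) 1 := by
    constructor
    · have := Tt_nonneg t j; rw [hy]; linarith
    · have := Tt_le_two t j; rw [hy]; linarith
  set C : ℂ := Complex.exp (-(Real.pi : ℂ) * Complex.I * ((Ss s t j : ℝ) : ℂ)) with hC
  have key2 : ∀ z : ℝ, fex s t j z =
      C * Complex.exp (-2 * (Real.pi : ℂ) * Complex.I * (z : ℂ) * (y : ℂ)) := by
    intro z
    rw [fex_formula, hC, ← Complex.exp_add]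
    congr 1
    push_cast [hy]
    ring
  have key3 : ∀ z : ℝ, fex s t j z =
      C * Complex.exp (-2 * (Real.pi : ℂ) * Complex.I * (y : ℂ) * (z : ℂ)) := by
    intro z
    rw [key2 z]; congr 2; ring
  have hCabs : ‖C‖ = 1 := by
    have h : (-(Real.pi : ℂ) * Complex.I * ((Ss s t j : ℝ) : ℂ)) =
        ((-(Real.pi * Ss s t j) : ℝ) : ℂ) * Complex.I := by push_cast; ring
    rw [hC, h, Complex.norm_exp_ofReal_mul_I]
  have hmain : (∑ α : Fin (K+1), fex s t j (cheb K α) * ((chebP K α x : ℝ) : ℂ))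
      - fex s t j x =
      C * ((∑ α : Fin (K+1),
          Complex.exp (-2 * (Real.pi : ℂ) * Complex.I * (y : ℂ) * ((cheb K α : ℝ) : ℂ)) *
            ((chebP K α x : ℝ) : ℂ)) -
        Complex.exp (-2 * (Real.pi : ℂ) * Complex.I * (x : ℂ) * (y : ℂ))) := by
    rw [key2 x]
    simp_rw [key3, mul_assoc]
    rw [← Finset.mul_sum, ← mul_sub]
  rw [hmain, norm_mul, hCabs, one_mul, norm_sub_rev]
  exact Eworst_ge K hx hymem

lemma interp_step (K : ℕ) (s t : ℕ → Fin 2) (j : ℕ) (B : ℝ) (hB : 0 ≤ B)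
    (hnode : ∀ α : Fin (K+1),
      ‖ell K s t j (cheb K α) - fex s t j (cheb K α)‖ ≤ B)
    {x : ℝ} (hx : x ∈ Set.Icc (0:ℝ) 1) :
    ‖(∑ α : Fin (K+1), ell K s t j (cheb K α) * ((chebP K α x : ℝ) : ℂ))
      - fex s t j x‖ ≤ Lambda K * B + Eworst K := by
  have hsplit : (∑ α : Fin (K+1), ell K s t j (cheb K α) * ((chebP K α x : ℝ) : ℂ))
      - fex s t j x =
      (∑ α : Fin (K+1), (ell K s t j (cheb K α) - fex s t j (cheb K α)) *
        ((chebP K α x : ℝ) : ℂ)) +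
      ((∑ α : Fin (K+1), fex s t j (cheb K α) * ((chebP K α x : ℝ) : ℂ)) - fex s t j x) := by
    simp [sub_mul, Finset.sum_sub_distrib]
  rw [hsplit]
  refine le_trans (norm_add_le _ _) (add_le_add ?_ (fex_interp_err K s t j hx))
  refine le_trans (norm_sum_le _ _) ?_
  have h1 : ∀ α : Fin (K+1),
      ‖(ell K s t j (cheb K α) - fex s t j (cheb K α)) * ((chebP K α x : ℝ) : ℂ)‖
        ≤ B * |chebP K α x| := by
    intro α
    rw [norm_mul, Complex.norm_real, Real.norm_eq_abs]
    exact mul_le_mul_of_nonneg_right (hnode α) (abs_nonneg _)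
  refine le_trans (Finset.sum_le_sum fun α _ => h1 α) ?_
  rw [← Finset.mul_sum, mul_comm]
  exact mul_le_mul_of_nonneg_right (Lambda_ge K hx) hB

lemma err_sum_nonneg (K j : ℕ) : 0 ≤ Eworst K * ∑ p ∈ Finset.range j, Lambda K ^ p :=
  mul_nonneg (Eworst_nonneg K)
    (Finset.sum_nonneg fun p _ => pow_nonneg (Lambda_nonneg K) p)

lemma err (K : ℕ) (s t : ℕ → Fin 2) (j : ℕ) :
    ∀ x ∈ Set.Icc (0:ℝ) 1,
      ‖ell K s t j x - fex s t j x‖ ≤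
        Eworst K * ∑ p ∈ Finset.range j, Lambda K ^ p := by
  induction j with
  | zero =>
    intro x _
    have : ell K s t 0 x = fex s t 0 x := rfl
    simp [this]
  | succ j ih =>
    intro x hx
    have hw : (((s (j+1) : ℕ) : ℝ) + x) / 2 ∈ Set.Icc (0:ℝ) 1 := by
      obtain ⟨h0, h1⟩ := hx
      have hs0 : (0:ℝ) ≤ ((s (j+1) : ℕ) : ℝ) := Nat.cast_nonneg _
      have hs1 := fin2_le (s (j+1))
      constructor <;> [linarith; linarith]
    have hfactor : ell K s t (j+1) x - fex s t (j+1) x =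
        ((∑ α : Fin (K+1), ell K s t j (cheb K α) *
            ((chebP K α ((((s (j+1) : ℕ) : ℝ) + x) / 2) : ℝ) : ℂ))
          - fex s t j ((((s (j+1) : ℕ) : ℝ) + x) / 2)) *
          E1 (((s (j+1) : ℕ) : ℝ) + x) (t (j+1)) := by
      rw [ell, fex, ← sub_mul]
    rw [hfactor, norm_mul, abs_E1, mul_one]
    have hstep := interp_step K s t j _ (err_sum_nonneg K j)
      (fun α => ih (cheb K α) (cheb_mem K α)) hw
    refine hstep.trans (le_of_eq ?_)
    rw [geom_sum_succ]
    ring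

noncomputable def contr (K : ℕ) : ℕ → (ℕ → Fin 2) → (ℕ → Fin 2) → (Fin (K+1) → ℂ) → Fin (K+1) → ℂ
  | 0, _, _, L => L
  | j+1, s, t, L => contr K j (fun i => s (i+1)) (fun i => t (i+1))
      (fun β => ∑ α : Fin (K+1), L α * Acore K α β (s 1) (t 1))

lemma path_sum (K : ℕ) : ∀ (m : ℕ) (s t : ℕ → Fin 2) (L g : Fin (K+1) → ℂ),
    (∑ a : Fin (m+1) → Fin (K+1), L (a 0) *
      (∏ i : Fin m, Acore K (a i.castSucc) (a i.succ) (s ((i : ℕ)+1)) (t ((i : ℕ)+1))) *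
      g (a (Fin.last m)))
    = ∑ β : Fin (K+1), contr K m s t L β * g β := by
  intro m
  induction m with
  | zero =>
    intro s t L g
    rw [contr]
    rw [← Equiv.sum_comp (Equiv.funUnique (Fin 1) (Fin (K+1))).symm]
    simp
  | succ m ihm =>
    intro s t L g
    rw [contr,
      ← ihm (fun i => s (i+1)) (fun i => t (i+1))
        (fun β => ∑ α : Fin (K+1), L α * Acore K α β (s 1) (t 1)) g]
    rw [← Equiv.sum_comp (Fin.consEquiv (fun _ : Fin (m+2) => Fin (K+1)))]
    rw [Fintype.sum_prod_type]
    rw [Finset.sum_comm]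
    refine Finset.sum_congr rfl fun a' _ => ?_
    rw [Finset.sum_mul, Finset.sum_mul]
    refine Finset.sum_congr rfl fun x _ => ?_
    have hp : (∏ i : Fin (m+1),
        Acore K ((Fin.cons x a' : ∀ _ : Fin (m+2), Fin (K+1)) i.castSucc)
          ((Fin.cons x a' : ∀ _ : Fin (m+2), Fin (K+1)) i.succ) (s ((i : ℕ)+1)) (t ((i : ℕ)+1)))
        = Acore K x (a' 0) (s 1) (t 1) *
          ∏ i : Fin m, Acore K (a' i.castSucc) (a' i.succ) (s ((i : ℕ)+1+1)) (t ((i : ℕ)+1+1)) := by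
      rw [Fin.prod_univ_succ]
      congr 1
    simp only [Fin.consEquiv_apply, Fin.cons_zero]
    rw [hp, ← Fin.succ_last, Fin.cons_succ]
    ring

lemma contr_last (K : ℕ) : ∀ (m : ℕ) (s t : ℕ → Fin 2) (L : Fin (K+1) → ℂ) (β : Fin (K+1)),
    contr K (m+1) s t L β =
      ∑ α : Fin (K+1), contr K m s t L α * Acore K α β (s (m+1)) (t (m+1)) := by
  intro m
  induction m with
  | zero => intro s t L β; rfl
  | succ m ih =>
    intro s t L β
    show contr K (m+1) (fun i => s (i+1)) (fun i => t (i+1))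
      (fun β => ∑ α : Fin (K+1), L α * Acore K α β (s 1) (t 1)) β = _
    rw [ih]
    rfl

lemma vec_eq_contr (K : ℕ) (s t : ℕ → Fin 2) (m : ℕ) (β : Fin (K+1)) :
    vec K s t m β = contr K m s t (fun γ => AL K γ (s 0) (t 0)) β := by
  induction m generalizing β with
  | zero => rfl
  | succ m ih =>
    rw [vec, contr_last]
    exact Finset.sum_congr rfl fun α _ => by rw [ih]

lemma Tt_closed (t : ℕ → Fin 2) (j : ℕ) :
    Tt t j = ∑ l ∈ Finset.range (j+1), (2:ℝ)^l / (2:ℝ)^j * ((t l : ℕ) : ℝ) := by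
  induction j with
  | zero => simp [Tt]
  | succ j ih =>
    rw [Tt, ih]
    conv_rhs => rw [Finset.sum_range_succ]
    rw [Finset.sum_div]
    congr 1
    · exact Finset.sum_congr rfl fun l _ => by rw [pow_succ]; ring
    · rw [div_self (by positivity), one_mul]

lemma Ss_closed (s t : ℕ → Fin 2) (j : ℕ) :
    Ss s t j = ∑ k ∈ Finset.range (j+1), ((s k : ℕ) : ℝ) * Tt t k := by
  induction j with
  | zero => simp [Ss, Tt]
  | succ j ih =>
    conv_rhs => rw [Finset.sum_range_succ]
    rw [Ss, ih]

lemma dft_eq (n : ℕ) (hn : 1 ≤ n) (s t : ℕ → Fin 2) (σ τ : Fin n → Fin 2)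
    (hs : ∀ k : Fin n, s (k : ℕ) = σ k) (ht : ∀ l : Fin n, t (l : ℕ) = τ l) :
    dftF n σ τ = Complex.exp (-(Real.pi : ℂ) * Complex.I * ((Ss s t (n-1) : ℝ) : ℂ)) := by
  set N : ℕ := ∑ k ∈ Finset.range n, ∑ l ∈ Finset.Ico (k+1) n,
    2^(l-k-1) * (s k : ℕ) * (t l : ℕ) with hN
  have hD : (∑ k : Fin n, ∑ l : Fin n,
      (2 : ℝ) ^ ((l : ℕ) + 1) / (2 : ℝ) ^ ((k : ℕ) + 1) *
        ((σ k : ℕ) : ℝ) * ((τ l : ℕ) : ℝ)) = Ss s t (n-1) + 2 * (N : ℝ) := by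
    have step1 : (∑ k : Fin n, ∑ l : Fin n,
        (2 : ℝ) ^ ((l : ℕ) + 1) / (2 : ℝ) ^ ((k : ℕ) + 1) *
          ((σ k : ℕ) : ℝ) * ((τ l : ℕ) : ℝ)) =
        ∑ k ∈ Finset.range n, ∑ l ∈ Finset.range n,
          (2 : ℝ) ^ (l + 1) / (2 : ℝ) ^ (k + 1) * ((s k : ℕ) : ℝ) * ((t l : ℕ) : ℝ) := by
      rw [← Fin.sum_univ_eq_sum_range (fun k => ∑ l ∈ Finset.range n,
        (2 : ℝ) ^ (l + 1) / (2 : ℝ) ^ (k + 1) * ((s k : ℕ) : ℝ) * ((t l : ℕ) : ℝ)) n]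
      refine Finset.sum_congr rfl fun k _ => ?_
      rw [← Fin.sum_univ_eq_sum_range (fun l =>
        (2 : ℝ) ^ (l + 1) / (2 : ℝ) ^ ((k : ℕ) + 1) * ((s (k : ℕ) : ℕ) : ℝ) * ((t l : ℕ) : ℝ)) n]
      exact Finset.sum_congr rfl fun l _ => by rw [hs k, ht l]
    rw [step1]
    have step2 : ∀ k ∈ Finset.range n,
        (∑ l ∈ Finset.range n,
          (2 : ℝ) ^ (l + 1) / (2 : ℝ) ^ (k + 1) * ((s k : ℕ) : ℝ) * ((t l : ℕ) : ℝ)) =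
        ((s k : ℕ) : ℝ) * Tt t k +
          ∑ l ∈ Finset.Ico (k+1) n,
            2 * ((2^(l-k-1) * (s k : ℕ) * (t l : ℕ) : ℕ) : ℝ) := by
      intro k hk
      rw [Finset.mem_range] at hk
      rw [Finset.range_eq_Ico,
        ← Finset.sum_Ico_consecutive _ (Nat.zero_le (k+1)) (Nat.succ_le_of_lt hk),
        ← Finset.range_eq_Ico]
      congr 1
      · rw [Tt_closed, Finset.mul_sum]
        refine Finset.sum_congr rfl fun l _ => ?_
        rw [pow_succ, pow_succ]
        ring
      · refine Finset.sum_congr rfl fun l hl => ?_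
        rw [Finset.mem_Ico] at hl
        have hl2 : l + 1 = (l - k - 1) + 1 + (k + 1) := by omega
        rw [hl2, pow_add, pow_add]
        push_cast
        field_simp
    rw [Finset.sum_congr rfl step2, Finset.sum_add_distrib]
    congr 1
    · rw [Ss_closed, show n - 1 + 1 = n from by omega]
    · rw [hN]
      push_cast
      rw [Finset.mul_sum]
      exact Finset.sum_congr rfl fun k _ => by rw [Finset.mul_sum]
  rw [dftF, hD]
  have hsplit : (-(Real.pi : ℂ) * Complex.I * ((Ss s t (n-1) + 2 * (N : ℝ) : ℝ) : ℂ)) =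
      -(Real.pi : ℂ) * Complex.I * ((Ss s t (n-1) : ℝ) : ℂ) +
        ((-(N : ℤ) : ℤ) : ℂ) * (2 * (Real.pi : ℂ) * Complex.I) := by
    push_cast; ring
  rw [hsplit, Complex.exp_add, Complex.exp_int_mul_two_pi_mul_I, mul_one]

/-- Entrywise error of the interpolative QFT MPO:
`|F_MPO(σ,τ) − F(σ,τ)| ≤ E_K · Σ_{p=0}^{n−2} Λ_K^p`. -/
theorem qft_mpo_error (n K : ℕ) (hn : 2 ≤ n) (hK : 1 ≤ K) (σ τ : Fin n → Fin 2) :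
    ‖Fmpo n K hn σ τ - dftF n σ τ‖ ≤
      Eworst K * ∑ p ∈ Finset.range (n - 1), Lambda K ^ p := by
  obtain ⟨m, rfl⟩ : ∃ m, n = m + 2 := ⟨n - 2, by omega⟩
  set s : ℕ → Fin 2 := fun i => if h : i < m + 2 then σ ⟨i, h⟩ else 0 with hs
  set t : ℕ → Fin 2 := fun i => if h : i < m + 2 then τ ⟨i, h⟩ else 0 with ht
  have hsk : ∀ k : Fin (m+2), s (k : ℕ) = σ k := by
    intro k; rw [hs]; simp [k.2]
  have htk : ∀ l : Fin (m+2), t (l : ℕ) = τ l := by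
    intro l; rw [ht]; simp [l.2]
  -- Step A : Fmpo as contraction
  have hmpo : Fmpo (m+2) K hn σ τ = ∑ β : Fin (K+1), vec K s t m β *
      AR K β (σ ⟨m+1, by omega⟩) (τ ⟨m+1, by omega⟩) := by
    have hrhs : ∀ β : Fin (K+1), vec K s t m β *
        AR K β (σ ⟨m+1, by omega⟩) (τ ⟨m+1, by omega⟩) =
        contr K m s t (fun γ => AL K γ (s 0) (t 0)) β *
          AR K β (σ ⟨m+1, by omega⟩) (τ ⟨m+1, by omega⟩) := by
      intro β; rw [vec_eq_contr]
    rw [Finset.sum_congr rfl fun β _ => hrhs β,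
      ← path_sum K m s t (fun γ => AL K γ (s 0) (t 0))
        (fun β => AR K β (σ ⟨m+1, by omega⟩) (τ ⟨m+1, by omega⟩))]
    refine Finset.sum_congr rfl fun a _ => ?_
    refine congrArg₂ (· * ·) (congrArg₂ (· * ·) ?_ ?_) ?_
    · -- AL part
      rw [hsk ⟨0, by omega⟩, htk ⟨0, by omega⟩]
      rfl
    · -- middle product
      refine Finset.prod_congr rfl fun i _ => ?_
      rw [hsk ⟨(i : ℕ)+1, by have := i.2; omega⟩, htk ⟨(i : ℕ)+1, by have := i.2; omega⟩]
      rfl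
    · -- AR part
      rfl
  -- Step B : rewrite via ell
  have hmpo2 : Fmpo (m+2) K hn σ τ =
      (∑ β : Fin (K+1), ell K s t m (cheb K β) *
        ((chebP K β (((s (m+1) : ℕ) : ℝ) / 2) : ℝ) : ℂ)) *
        E1 ((s (m+1) : ℕ) : ℝ) (t (m+1)) := by
    rw [hmpo, Finset.sum_mul]
    refine Finset.sum_congr rfl fun β _ => ?_
    rw [vec_eq_ell, ← hsk ⟨m+1, by omega⟩, ← htk ⟨m+1, by omega⟩, AR_eq, mul_assoc]
  -- Step C : dftF via fex
  have hdft : dftF (m+2) σ τ = fex s t m (((s (m+1) : ℕ) : ℝ) / 2) *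
      E1 ((s (m+1) : ℕ) : ℝ) (t (m+1)) := by
    rw [dft_eq (m+2) (by omega) s t σ τ hsk htk, fex_formula, E1, ← Complex.exp_add]
    congr 1
    show -(Real.pi : ℂ) * Complex.I * ((Ss s t (m+1) : ℝ) : ℂ) = _
    simp only [Ss, Tt]
    push_cast
    ring
  -- Step D : conclude
  rw [hmpo2, hdft, ← sub_mul, norm_mul, abs_E1, mul_one]
  have hu2 : ((s (m+1) : ℕ) : ℝ) / 2 ∈ Set.Icc (0:ℝ) 1 := by
    have h1 : (0:ℝ) ≤ ((s (m+1) : ℕ) : ℝ) := by positivity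
    have h2 : ((s (m+1) : ℕ) : ℝ) ≤ 1 := fin2_le _
    constructor <;> [linarith; linarith]
  have hstep := interp_step K s t m _ (err_sum_nonneg K m)
    (fun α => err K s t m (cheb K α) (cheb_mem K α)) hu2
  refine hstep.trans (le_of_eq ?_)
  show Lambda K * (Eworst K * ∑ p ∈ Finset.range m, Lambda K ^ p) + Eworst K =
    Eworst K * ∑ p ∈ Finset.range (m+1), Lambda K ^ p
  rw [geom_sum_succ]
  ring
end
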